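/- arXiv:1812.07204 — 4 statements merged into one kernel-verified Lean document; each statement's English description precedes it below -/
import Mathlib

section
/- Let $\bx=(x_i,\dots,x_N)$ and $\ba=(a_i,\dots,a_N)$ be positive real vectors, and define $\tilde\xi,\bb$ by the geometric row-insertion recursion: $\tilde\xi_i = \xi_i a_i$, $\tilde\xi_k = a_k(\tilde\xi_{k-1}+\xi_k)$, and $b_k = a_k \xi_k \tilde\xi_{k-1}/(\xi_{k-1}\tilde\xi_k)$ for $i+1\le k\le N$, where $\xi_j = x_i\cdots x_j$ and $\tilde\xi_j = \tilde x_i \cdots \tilde x_j$. Then the following discrete Toda-type equations hold: $a_i x_i = \tilde x_i$; for $j\ge i+1$, $a_j x_j = \tilde x_j b_j$; $1/a_i + 1/x_{i+1} = 1/b_{i+1}$; and for $j\ge i+1$, $1/a_j + 1/x_{j+1} = 1/\tilde x_j + 1/b_{j+1}$. -/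
/-- The geometric row-insertion recursion is equivalent to a system of discrete
Toda-type local equations (Noumi–Yamada). Here `x, a` are the input words on the
index range `[i, N]` (1-based), `xt` is the output word (determined by the
cumulative products `ξt`), and `b` is the bumped word. -/
theorem grsk_toda_equations (N i : ℕ) (hi : 1 ≤ i) (hiN : i ≤ N)
    (x a xt b : ℕ → ℝ)
    (hx : ∀ j, i ≤ j → j ≤ N → 0 < x j) (ha : ∀ j, i ≤ j → j ≤ N → 0 < a j)
    (ξ ξt : ℕ → ℝ)
    (hξ : ∀ j, ξ j = ∏ k ∈ Finset.Icc i j, x k)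
    (hξt : ∀ j, ξt j = ∏ k ∈ Finset.Icc i j, xt k)
    -- the geometric row-insertion recursion
    (hins1 : ξt i = ξ i * a i)
    (hins2 : ∀ k, i + 1 ≤ k → k ≤ N → ξt k = a k * (ξt (k - 1) + ξ k))
    (hb : ∀ k, i + 1 ≤ k → k ≤ N →
      b k = a k * (ξ k * ξt (k - 1)) / (ξ (k - 1) * ξt k)) :
    (a i * x i = xt i) ∧
    (∀ j, i + 1 ≤ j → j ≤ N → a j * x j = xt j * b j) ∧
    (i + 1 ≤ N → 1 / a i + 1 / x (i + 1) = 1 / b (i + 1)) ∧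
    (∀ j, i + 1 ≤ j → j + 1 ≤ N →
      1 / a j + 1 / x (j + 1) = 1 / xt j + 1 / b (j + 1)) := by
  have hξi : ξ i = x i := by rw [hξ, Finset.Icc_self, Finset.prod_singleton]
  have hξti : ξt i = xt i := by rw [hξt, Finset.Icc_self, Finset.prod_singleton]
  have hξstep : ∀ j, i ≤ j → ξ (j + 1) = ξ j * x (j + 1) := by
    intro j hj
    rw [hξ, hξ, Finset.prod_Icc_succ_top (by omega)]
  have hξtstep : ∀ j, i ≤ j → ξt (j + 1) = ξt j * xt (j + 1) := by
    intro j hj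
    rw [hξt, hξt, Finset.prod_Icc_succ_top (by omega)]
  have hξpos : ∀ j, i ≤ j → j ≤ N → 0 < ξ j := by
    intro j hj hjN
    rw [hξ]
    exact Finset.prod_pos fun k hk => by
      simp only [Finset.mem_Icc] at hk; exact hx k hk.1 (le_trans hk.2 hjN)
  have hξtpos : ∀ j, i ≤ j → j ≤ N → 0 < ξt j := by
    intro j hj
    induction j, hj using Nat.le_induction with
    | base => intro _; rw [hins1]; exact mul_pos (hξpos i le_rfl hiN) (ha i le_rfl hiN)
    | succ j hj ih =>
      intro hN
      have h2 := hins2 (j + 1) (by omega) hN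
      simp only [Nat.add_sub_cancel] at h2
      rw [h2]
      exact mul_pos (ha _ (by omega) hN)
        (add_pos (ih (by omega)) (hξpos _ (by omega) hN))
  refine ⟨?_, ?_, ?_, ?_⟩
  · rw [← hξti, hins1, hξi]; ring
  · intro j hj hjN
    have hQ := hξtpos (j - 1) (by omega) (by omega)
    have hP := hξpos (j - 1) (by omega) (by omega)
    have hstep := hξtstep (j - 1) (by omega)
    rw [Nat.sub_add_cancel (by omega)] at hstep
    have hstepx := hξstep (j - 1) (by omega)
    rw [Nat.sub_add_cancel (by omega)] at hstepx
    rw [hb j hj hjN, hstep, hstepx]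
    have hxtj : xt j ≠ 0 := by
      have := hξtpos j (by omega) hjN
      rw [hstep] at this
      rcases eq_or_ne (xt j) 0 with h | h
      · rw [h, mul_zero] at this; exact absurd this (lt_irrefl 0)
      · exact h
    field_simp
  · intro hN
    have h2 := hins2 (i + 1) le_rfl hN
    simp only [Nat.add_sub_cancel] at h2
    rw [hb (i + 1) le_rfl hN]
    simp only [Nat.add_sub_cancel]
    rw [h2, hξstep i le_rfl, hins1, hξi]
    have hxi := (hx i le_rfl hiN).ne'
    have hxi1 := (hx (i + 1) (by omega) hN).ne'
    have hai := (ha i le_rfl hiN).ne'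
    have hai1 := (ha (i + 1) (by omega) hN).ne'
    field_simp
    ring
  · intro j hj hjN
    have hjN' : j ≤ N := by omega
    have hQ := hξtpos (j - 1) (by omega) (by omega)
    have hP := hξpos j (by omega) hjN'
    have hT := hins2 j hj hjN'
    have hstep := hξtstep (j - 1) (by omega)
    rw [Nat.sub_add_cancel (by omega)] at hstep
    have hxtj : xt j = a j * (ξt (j - 1) + ξ j) / ξt (j - 1) := by
      rw [← hT, hstep]; field_simp
    have h2 := hins2 (j + 1) (by omega) hjN
    simp only [Nat.add_sub_cancel] at h2
    rw [hb (j + 1) (by omega) hjN]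
    simp only [Nat.add_sub_cancel]
    rw [h2, hξstep j (by omega), hxtj, hT]
    have haj := (ha j (by omega) hjN').ne'
    have haj1 := (ha (j + 1) (by omega) hjN).ne'
    have hxj1 := (hx (j + 1) (by omega) hjN).ne'
    have hQP : ξt (j - 1) + ξ j ≠ 0 := (add_pos hQ hP).ne'
    field_simp
    ring
end

section
/- For positive real vectors $\ba=(a_i,\dots,a_N)$ and $\bx=(x_i,\dots,x_N)$, let $(\tilde\bx,\bb)$ be the output of geometric row insertion of $\ba$ into $\bx$. Then the matrix identity $E_i(\bar\ba) E_i(\bar\bx) = E_i(\bar{\tilde\bx}) E_{i+1}(\bar\bb)$ holds, where for a vector $\by=(y_i,\dots,y_N)$ the matrix $E_i(\by)$ is the $N\times N$ matrix $\sum_{j=1}^{i-1} E_{jj} + \sum_{j=i}^{N} y_j E_{jj} + \sum_{j=i}^{N-1} E_{j,j+1}$, $E_{jk}$ denotes the elementary matrix with 1 in entry $(j,k)$, and $\bar\by$ denotes the vector of entrywise inverses. -/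
open Finset

/-- The matrix `E_i(y)` (1-based index `i`): identity on the first `i-1` diagonal
entries, the entries of `y` on the remaining diagonal, and ones on the
superdiagonal from position `i` onwards.  A `Fin N` index `j` represents the
1-based index `j+1`. -/
def Ei (N i : ℕ) (y : ℕ → ℝ) : Matrix (Fin N) (Fin N) ℝ :=
  Matrix.of fun j k =>
    if k = j then (if (j : ℕ) + 1 < i then 1 else y ((j : ℕ) + 1))
    else if (k : ℕ) = (j : ℕ) + 1 ∧ i ≤ (j : ℕ) + 1 then 1 else 0

lemma Ei_diag {N : ℕ} (i : ℕ) (y : ℕ → ℝ) (p : Fin N) :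
    Ei N i y p p = if (p : ℕ) + 1 < i then 1 else y ((p : ℕ) + 1) := by
  simp [Ei]

lemma Ei_super {N : ℕ} (i : ℕ) (y : ℕ → ℝ) (p q : Fin N)
    (h : (q : ℕ) = (p : ℕ) + 1) :
    Ei N i y p q = if i ≤ (p : ℕ) + 1 then 1 else 0 := by
  have hne : q ≠ p := by intro hc; subst hc; omega
  simp [Ei, hne, h]

lemma Ei_zero {N : ℕ} (i : ℕ) (y : ℕ → ℝ) (p q : Fin N)
    (h1 : (q : ℕ) ≠ (p : ℕ)) (h2 : (q : ℕ) ≠ (p : ℕ) + 1) :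
    Ei N i y p q = 0 := by
  have hne : q ≠ p := by intro hc; subst hc; omega
  simp [Ei, hne, h2]

lemma sum_two {N : ℕ} (j : Fin N) (f : Fin N → ℝ)
    (hf : ∀ l : Fin N, l ≠ j → (l : ℕ) ≠ (j : ℕ) + 1 → f l = 0) :
    ∑ l, f l = f j + (if h : (j : ℕ) + 1 < N then f ⟨(j : ℕ) + 1, h⟩ else 0) := by
  by_cases h : (j : ℕ) + 1 < N
  · rw [dif_pos h]
    have hne : j ≠ (⟨(j : ℕ) + 1, h⟩ : Fin N) := by
      intro hc; have := congrArg Fin.val hc; simp at this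
    rw [← Finset.sum_pair hne]
    symm
    apply Finset.sum_subset (Finset.subset_univ _)
    intro l _ hl
    simp only [Finset.mem_insert, Finset.mem_singleton] at hl
    push_neg at hl
    exact hf l hl.1 (fun hc => hl.2 (Fin.ext hc))
  · rw [dif_neg h, add_zero]
    rw [← Finset.sum_singleton (f := f) (a := j)]
    symm
    apply Finset.sum_subset (Finset.subset_univ _)
    intro l _ hl
    simp only [Finset.mem_singleton] at hl
    exact hf l hl (by omega)

/-- Geometric row insertion of `a` into `x` (on index range `[i,N]`, 1-based),
in the form of the Noumi–Yamada matrix identity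
`E_i(ā) E_i(x̄) = E_i(x̃̄) E_{i+1}(b̄)`. -/
theorem grsk_matrix_identity (N i : ℕ) (hi : 1 ≤ i) (hiN : i ≤ N)
    (x a xt b : ℕ → ℝ)
    (hx : ∀ j, i ≤ j → j ≤ N → 0 < x j) (ha : ∀ j, i ≤ j → j ≤ N → 0 < a j)
    (ξ ξt : ℕ → ℝ)
    (hξ : ∀ j, ξ j = ∏ k ∈ Finset.Icc i j, x k)
    (hξt : ∀ j, ξt j = ∏ k ∈ Finset.Icc i j, xt k)
    (hins1 : ξt i = ξ i * a i)
    (hins2 : ∀ k, i + 1 ≤ k → k ≤ N → ξt k = a k * (ξt (k - 1) + ξ k))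
    (hb : ∀ k, i + 1 ≤ k → k ≤ N →
      b k = a k * (ξ k * ξt (k - 1)) / (ξ (k - 1) * ξt k)) :
    Ei N i (fun j => (a j)⁻¹) * Ei N i (fun j => (x j)⁻¹) =
      Ei N i (fun j => (xt j)⁻¹) * Ei N (i + 1) (fun j => (b j)⁻¹) := by
  have hξpos : ∀ j, i ≤ j → j ≤ N → 0 < ξ j := by
    intro j h1 h2
    rw [hξ]
    exact Finset.prod_pos fun k hk =>
      hx k (Finset.mem_Icc.mp hk).1 (le_trans (Finset.mem_Icc.mp hk).2 h2)
  have hξtpos : ∀ j, i ≤ j → j ≤ N → 0 < ξt j := by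
    intro j hj
    induction j, hj using Nat.le_induction with
    | base => intro _; rw [hins1]; exact mul_pos (hξpos i le_rfl hiN) (ha i le_rfl hiN)
    | succ m hm ih =>
      intro h2
      rw [hins2 (m + 1) (by omega) h2]
      simp only [Nat.add_sub_cancel]
      exact mul_pos (ha _ (by omega) h2)
        (add_pos (ih (by omega)) (hξpos _ (by omega) h2))
  have hstep : ∀ m, i + 1 ≤ m → ξ m = ξ (m - 1) * x m := by
    intro m hm
    obtain ⟨p, rfl⟩ : ∃ p, m = p + 1 := ⟨m - 1, by omega⟩
    simp only [Nat.add_sub_cancel]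
    rw [hξ, hξ, Finset.prod_Icc_succ_top (by omega)]
  have hstept : ∀ m, i + 1 ≤ m → ξt m = ξt (m - 1) * xt m := by
    intro m hm
    obtain ⟨p, rfl⟩ : ∃ p, m = p + 1 := ⟨m - 1, by omega⟩
    simp only [Nat.add_sub_cancel]
    rw [hξt, hξt, Finset.prod_Icc_succ_top (by omega)]
  have hξi : ξ i = x i := by rw [hξ, Finset.Icc_self, Finset.prod_singleton]
  have hξti : ξt i = xt i := by rw [hξt, Finset.Icc_self, Finset.prod_singleton]
  -- key scalar identities
  have key0 : (a i)⁻¹ * (x i)⁻¹ = (xt i)⁻¹ := by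
    have hxti : xt i = x i * a i := by rw [← hξti, hins1, hξi]
    rw [hxti, mul_inv, mul_comm]
  have key1 : ∀ m, i + 1 ≤ m → m ≤ N →
      (a m)⁻¹ * (x m)⁻¹ = (xt m)⁻¹ * (b m)⁻¹ := by
    intro m h1 h2
    have e1 := hstep m h1
    have e2 := hstept m h1
    have e3 := hb m h1 h2
    have p1 := hξpos (m - 1) (by omega) (by omega)
    have p2 := hξpos m (by omega) h2
    have p3 := hξtpos (m - 1) (by omega) (by omega)
    have p4 := hξtpos m (by omega) h2
    have pa := ha m (by omega) h2
    have hx' : x m = ξ m / ξ (m - 1) := by rw [e1]; field_simp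
    have hxt' : xt m = ξt m / ξt (m - 1) := by rw [e2]; field_simp
    have hmain : xt m * b m = a m * x m := by
      rw [e3, hx', hxt']; field_simp
    rw [← mul_inv, ← mul_inv, ← hmain, mul_comm]
  have key2 : ∀ m, i + 1 ≤ m → m + 1 ≤ N →
      (a m)⁻¹ + (x (m + 1))⁻¹ = (xt m)⁻¹ + (b (m + 1))⁻¹ := by
    intro m h1 h2
    have r1 := hins2 m h1 (by omega)
    have r2 := hins2 (m + 1) (by omega) h2
    simp only [Nat.add_sub_cancel] at r2
    have e3 := hb (m + 1) (by omega) h2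
    simp only [Nat.add_sub_cancel] at e3
    have e4 := hstep (m + 1) (by omega)
    simp only [Nat.add_sub_cancel] at e4
    have e5 := hstept m h1
    have p1 := hξpos (m - 1) (by omega) (by omega)
    have p2 := hξpos m (by omega) (by omega)
    have p2' := hξpos (m + 1) (by omega) h2
    have p3 := hξtpos (m - 1) (by omega) (by omega)
    have p4 := hξtpos m (by omega) (by omega)
    have p4' := hξtpos (m + 1) (by omega) h2
    have pa := ha m (by omega) (by omega)
    have pa' := ha (m + 1) (by omega) h2
    have ea : a m = ξt m / (ξt (m - 1) + ξ m) := by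
      rw [r1]; field_simp
    have ea' : a (m + 1) = ξt (m + 1) / (ξt m + ξ (m + 1)) := by
      rw [r2]; field_simp
    have ex : x (m + 1) = ξ (m + 1) / ξ m := by rw [e4]; field_simp
    have exT : xt m = ξt m / ξt (m - 1) := by rw [e5]; field_simp
    rw [e3, ea, ea', ex, exT]
    have hs1 : ξt (m - 1) + ξ m ≠ 0 := by positivity
    have hs2 : ξt m + ξ (m + 1) ≠ 0 := by positivity
    field_simp
    ring
  have key2i : i + 1 ≤ N → (a i)⁻¹ + (x (i + 1))⁻¹ = (b (i + 1))⁻¹ := by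
    intro h2
    have r2 := hins2 (i + 1) (by omega) h2
    simp only [Nat.add_sub_cancel] at r2
    have e3 := hb (i + 1) (by omega) h2
    simp only [Nat.add_sub_cancel] at e3
    have e4 := hstep (i + 1) (by omega)
    simp only [Nat.add_sub_cancel] at e4
    have p2 := hξpos i le_rfl (by omega)
    have p2' := hξpos (i + 1) (by omega) h2
    have p4 := hξtpos i le_rfl (by omega)
    have p4' := hξtpos (i + 1) (by omega) h2
    have pa := ha i le_rfl (by omega)
    have pa' := ha (i + 1) (by omega) h2
    have ea' : a (i + 1) = ξt (i + 1) / (ξt i + ξ (i + 1)) := by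
      rw [r2]; field_simp
    have ex : x (i + 1) = ξ (i + 1) / ξ i := by rw [e4]; field_simp
    have eai : a i = ξt i / ξ i := by rw [hins1]; field_simp
    rw [e3, ea', ex, eai]
    have hs2 : ξt i + ξ (i + 1) ≠ 0 := by positivity
    field_simp
    ring
  ext j k
  rw [Matrix.mul_apply, Matrix.mul_apply]
  rw [sum_two j _ (fun l h1 h2 => by
    rw [Ei_zero i _ j l (by simpa [Fin.ext_iff] using h1) h2, zero_mul])]
  rw [sum_two j _ (fun l h1 h2 => by
    rw [Ei_zero i _ j l (by simpa [Fin.ext_iff] using h1) h2, zero_mul])]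
  have hjN' : (j : ℕ) < N := j.isLt
  have hkN : (k : ℕ) < N := k.isLt
  -- diagonal entry identity
  have diagkey : Ei N i (fun t => (a t)⁻¹) j j * Ei N i (fun t => (x t)⁻¹) j j =
      Ei N i (fun t => (xt t)⁻¹) j j * Ei N (i + 1) (fun t => (b t)⁻¹) j j := by
    rw [Ei_diag, Ei_diag, Ei_diag, Ei_diag]
    split_ifs with h1 h2 h2
    · norm_num
    · omega
    · have hji : (j : ℕ) + 1 = i := by omega
      rw [hji, mul_one]; exact key0
    · exact key1 ((j : ℕ) + 1) (by omega) (by omega)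
  by_cases hjN : (j : ℕ) + 1 < N
  · rw [dif_pos hjN, dif_pos hjN]
    have hsv : ((⟨(j : ℕ) + 1, hjN⟩ : Fin N) : ℕ) = (j : ℕ) + 1 := rfl
    by_cases hkj : k = j
    · rw [hkj]
      rw [Ei_zero i _ ⟨(j : ℕ) + 1, hjN⟩ j (by rw [hsv]; omega) (by rw [hsv]; omega),
        mul_zero, add_zero,
        Ei_zero (i + 1) _ ⟨(j : ℕ) + 1, hjN⟩ j (by rw [hsv]; omega) (by rw [hsv]; omega),
        mul_zero, add_zero]
      exact diagkey
    · by_cases hk1 : (k : ℕ) = (j : ℕ) + 1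
      · have hsk : (⟨(j : ℕ) + 1, hjN⟩ : Fin N) = k := Fin.ext (by rw [hsv, hk1])
        rw [hsk]
        rw [Ei_super i _ j k hk1, Ei_super i _ j k hk1, Ei_super i _ j k hk1,
          Ei_super (i + 1) _ j k hk1, Ei_diag, Ei_diag, Ei_diag, Ei_diag,
          ← hk1]
        split_ifs <;>
          (try simp only [mul_one, one_mul, mul_zero, zero_add, zero_mul, add_zero]) <;>
          (try omega)
        · exact key2 ((k : ℕ)) (by omega) (by omega)
        · have hmi : (k : ℕ) = i := by omega
          rw [hmi]
          exact key2i (by omega)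
      · by_cases hk2 : (k : ℕ) = (j : ℕ) + 2
        · rw [Ei_zero i _ j k (by omega) (by omega),
            Ei_zero (i + 1) _ j k (by omega) (by omega), mul_zero, mul_zero,
            zero_add, zero_add,
            Ei_super i _ j ⟨(j : ℕ) + 1, hjN⟩ hsv, Ei_super i _ ⟨(j : ℕ) + 1, hjN⟩ k (by rw [hsv]; omega),
            Ei_super i _ j ⟨(j : ℕ) + 1, hjN⟩ hsv, Ei_super (i + 1) _ ⟨(j : ℕ) + 1, hjN⟩ k (by rw [hsv]; omega),
            hsv]
          split_ifs <;> first | omega | norm_num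
        · rw [Ei_zero i _ j k (by omega) (by omega), mul_zero,
            Ei_zero (i + 1) _ j k (by omega) (by omega), mul_zero,
            Ei_zero i _ ⟨(j : ℕ) + 1, hjN⟩ k (by rw [hsv]; omega) (by rw [hsv]; omega), mul_zero,
            Ei_zero (i + 1) _ ⟨(j : ℕ) + 1, hjN⟩ k (by rw [hsv]; omega) (by rw [hsv]; omega), mul_zero]
  · rw [dif_neg hjN, dif_neg hjN, add_zero, add_zero]
    by_cases hkj : k = j
    · rw [hkj]; exact diagkey
    · have hk0 : (k : ℕ) ≠ (j : ℕ) := by simpa [Fin.ext_iff] using hkj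
      have hk1 : (k : ℕ) ≠ (j : ℕ) + 1 := by omega
      rw [Ei_zero i _ j k hk0 hk1, mul_zero,
        Ei_zero (i + 1) _ j k hk0 hk1, mul_zero]
end

section
/- Let $G$ be a finite directed acyclic graph with edge weights $w(e)$ in a commutative ring, and for a path $\pi$ set $w(\pi)=\prod_{e\in\pi}w(e)$. Let $u_1,\dots,u_r$ and $v_1,\dots,v_r$ be vertices such that for all $i<j$ and $i'>j'$, every path from $u_i$ to $v_j$ intersects (shares a vertex with) every path from $u_{i'}$ to $v_{j'}$. Then $\det\big(\sum_{\pi: u_i\to v_j} w(\pi)\big)_{1\le i,j\le r} = \sum_{(\pi_1,\dots,\pi_r)} w(\pi_1)\cdots w(\pi_r)$, where the sum on the right is over $r$-tuples of pairwise vertex-disjoint paths with $\pi_k$ going from $u_k$ to $v_k$. -/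
/-!
Expanding the determinant writes it as the signed sum `∑ sign σ * ∏ k, w (π k)` over pairs
`(σ, π)` in which `π k` is a path from `u k` to `v (σ k)`. On the pairs whose paths meet,
swapping tails at a canonical meeting point (the first vertex `x` of the least-indexed path
`π i` that meets another path, swapped with the least other `π j` through `x`) is a
weight-preserving, sign-reversing involution: since acyclicity makes paths duplicate-free, the
swap does not change the canonical point. So these pairs cancel. A vertex-disjoint family has
`σ = 1`: otherwise `k < σ k` and `σ l < l` for some `k`, `l`, and the paths `π k` and `π l`
cross, hence meet.
-/

open Finset

variable {V : Type*} {R : Type*}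

/-- `p` is a directed path from `u` to `v` in the graph with adjacency `adj`:
a nonempty list of vertices starting at `u`, ending at `v`, with consecutive
vertices adjacent. -/
def IsDirPath (adj : V → V → Prop) (u v : V) (p : List V) : Prop :=
  p ≠ [] ∧ p.head? = some u ∧ p.getLast? = some v ∧ p.Chain' adj

def pathWeight [CommRing R] (w : V → V → R) (p : List V) : R :=
  ((p.zip p.tail).map fun e => w e.1 e.2).prod

section PermOrder

variable {ι : Type*} [LinearOrder ι] [Finite ι] {σ : Equiv.Perm ι}

theorem Equiv.Perm.eq_one_of_forall_le (h : ∀ k, k ≤ σ k) : σ = 1 := by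
  by_contra hσ
  have hmoved : {k | σ k ≠ k}.Nonempty := by
    by_contra! hfix
    exact hσ (Equiv.ext fun k => by simpa using Set.eq_empty_iff_forall_notMem.1 hfix k)
  obtain ⟨m, hm, hmax⟩ := Set.exists_max_image _ id (Set.toFinite _) hmoved
  have hlt : m < σ m := (h m).lt_of_ne' hm
  exact (hmax (σ m) (σ.injective.ne hm)).not_gt hlt

theorem Equiv.Perm.exists_apply_lt_of_ne_one (hσ : σ ≠ 1) : ∃ k, σ k < k := by
  by_contra! h
  exact hσ (eq_one_of_forall_le h)

theorem Equiv.Perm.exists_lt_apply_of_ne_one (hσ : σ ≠ 1) : ∃ k, k < σ k := by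
  obtain ⟨k, hk⟩ := exists_apply_lt_of_ne_one (inv_ne_one.2 hσ)
  exact ⟨σ⁻¹ k, by simpa using hk⟩

end PermOrder

theorem Matrix.det_of_sum {n α : Type*} [Fintype n] [DecidableEq n] [CommRing R]
    (S : n → n → Finset α) (f : α → R) :
    (Matrix.of fun i j => ∑ p ∈ S i j, f p).det =
      ∑ σ : Equiv.Perm n, ∑ π ∈ Fintype.piFinset fun i => S i (σ i),
        (Equiv.Perm.sign σ : R) * ∏ i, f (π i) := by
  rw [← det_transpose, det_apply']
  refine Finset.sum_congr rfl fun σ _ => ?_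
  rw [← Finset.mul_sum, ← Finset.prod_univ_sum]
  rfl

theorem finsum_subtype_eq_sum_toFinset {α M : Type*} [AddCommMonoid M] {P : α → Prop}
    (hP : {x | P x}.Finite) (f : α → M) :
    ∑ᶠ x : {x // P x}, f x = ∑ x ∈ hP.toFinset, f x := by
  rw [finsum_subtype_eq_finsum_cond]
  exact finsum_mem_eq_finite_toFinset_sum f hP

theorem pathWeight_append_cons [CommRing R] (w : V → V → R) (s t : List V) (x : V) :
    pathWeight w (s ++ x :: t) = pathWeight w (s ++ [x]) * pathWeight w (x :: t) := by
  induction s with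
  | nil => simp [pathWeight]
  | cons a s ih =>
    cases s <;> simp_all [pathWeight, mul_assoc]

section Paths

variable {adj : V → V → Prop}

theorem List.IsChain.nodup_of_acyclic (hacyc : ∀ v p, IsDirPath adj v v p → p.length ≤ 1)
    {p : List V} (hp : p.IsChain adj) : p.Nodup := by
  induction p with
  | nil => exact List.nodup_nil
  | cons a l ih =>
    refine List.nodup_cons.2 ⟨fun ha => ?_, ih hp.tail⟩
    obtain ⟨A, B, rfl⟩ := List.append_of_mem ha
    have hcycle : IsDirPath adj a a (a :: A ++ [a]) :=
      ⟨by simp, rfl, List.getLast?_concat .., hp.prefix ⟨B, by simp⟩⟩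
    simpa using hacyc a _ hcycle

theorem IsDirPath.of_append_cons {a b x : V} {s t : List V}
    (h : IsDirPath adj a b (s ++ x :: t)) :
    IsDirPath adj a x (s ++ [x]) ∧ IsDirPath adj x b (x :: t) := by
  obtain ⟨-, hhead, hlast, hchain⟩ := h
  refine ⟨⟨by simp, ?_, by simp, hchain.prefix ⟨t, by simp⟩⟩,
    ⟨by simp, rfl, ?_, hchain.suffix ⟨s, rfl⟩⟩⟩
  · simpa [List.head?_append] using hhead
  · simpa [List.getLast?_append_cons] using hlast

theorem IsDirPath.append_cons {a b x : V} {s t : List V}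
    (h₁ : IsDirPath adj a x (s ++ [x])) (h₂ : IsDirPath adj x b (x :: t)) :
    IsDirPath adj a b (s ++ x :: t) := by
  refine ⟨by simp, ?_, ?_, ?_⟩
  · simpa [List.head?_append] using h₁.2.1
  · simpa [List.getLast?_append_cons] using h₂.2.2.1
  · show List.IsChain adj (s ++ x :: t)
    simpa using h₁.2.2.2.append_overlap (l₃ := t) h₂.2.2.2 (List.cons_ne_nil x [])

theorem finite_setOf_isChain [Finite V] (hacyc : ∀ v p, IsDirPath adj v v p → p.length ≤ 1) :
    {p : List V | p.IsChain adj}.Finite := by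
  cases nonempty_fintype V
  exact (List.finite_length_le V (Fintype.card V)).subset fun p hp =>
    (List.IsChain.nodup_of_acyclic hacyc hp).length_le_card

end Paths

section TailSwap

variable [DecidableEq V] {x : V} {p q : List V}

def tailSwap (x : V) (p q : List V) : List V :=
  p.take (p.idxOf x) ++ q.drop (q.idxOf x)

theorem List.drop_idxOf_eq_cons (hp : x ∈ p) :
    p.drop (p.idxOf x) = x :: p.drop (p.idxOf x + 1) := by
  rw [List.drop_eq_getElem_cons (List.idxOf_lt_length_of_mem hp), List.getElem_idxOf]

theorem List.eq_take_idxOf_append_cons (hp : x ∈ p) :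
    p = p.take (p.idxOf x) ++ x :: p.drop (p.idxOf x + 1) := by
  rw [← List.drop_idxOf_eq_cons hp, List.take_append_drop]

theorem List.notMem_take_idxOf (x : V) (p : List V) : x ∉ p.take (p.idxOf x) := by
  by_cases hp : x ∈ p
  · simp [List.mem_take_iff_idxOf_lt hp]
  · exact fun h => hp (List.mem_of_mem_take h)

theorem tailSwap_eq (hq : x ∈ q) :
    tailSwap x p q = p.take (p.idxOf x) ++ x :: q.drop (q.idxOf x + 1) := by
  rw [tailSwap, List.drop_idxOf_eq_cons hq]

theorem mem_tailSwap_self (hq : x ∈ q) : x ∈ tailSwap x p q := by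
  simp [tailSwap_eq hq]

theorem mem_or_mem_of_mem_tailSwap {z : V} (hz : z ∈ tailSwap x p q) : z ∈ p ∨ z ∈ q :=
  (List.mem_append.1 hz).imp List.mem_of_mem_take List.mem_of_mem_drop

theorem idxOf_tailSwap (hq : x ∈ q) : (tailSwap x p q).idxOf x = p.idxOf x := by
  rw [tailSwap_eq hq, List.idxOf_append_of_notMem (List.notMem_take_idxOf x p),
    List.idxOf_cons_self, add_zero, List.length_take, min_eq_left List.idxOf_le_length]

theorem take_idxOf_tailSwap (hq : x ∈ q) :
    (tailSwap x p q).take ((tailSwap x p q).idxOf x) = p.take (p.idxOf x) := by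
  rw [idxOf_tailSwap hq, tailSwap, List.take_left' (by simp [List.idxOf_le_length])]

theorem drop_idxOf_tailSwap (hq : x ∈ q) :
    (tailSwap x p q).drop ((tailSwap x p q).idxOf x) = q.drop (q.idxOf x) := by
  rw [idxOf_tailSwap hq, tailSwap, List.drop_left' (by simp [List.idxOf_le_length])]

theorem tailSwap_tailSwap (hp : x ∈ p) (hq : x ∈ q) :
    tailSwap x (tailSwap x p q) (tailSwap x q p) = p := by
  rw [tailSwap, take_idxOf_tailSwap hq, drop_idxOf_tailSwap hp, List.take_append_drop]

theorem IsDirPath.tailSwap {adj : V → V → Prop} {a b c d : V} (hp : IsDirPath adj a b p)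
    (hq : IsDirPath adj c d q) (hxp : x ∈ p) (hxq : x ∈ q) :
    IsDirPath adj a d (tailSwap x p q) := by
  rw [List.eq_take_idxOf_append_cons hxp] at hp
  rw [List.eq_take_idxOf_append_cons hxq] at hq
  rw [tailSwap_eq hxq]
  exact hp.of_append_cons.1.append_cons hq.of_append_cons.2

theorem pathWeight_tailSwap_mul [CommRing R] (w : V → V → R) (hp : x ∈ p) (hq : x ∈ q) :
    pathWeight w (tailSwap x p q) * pathWeight w (tailSwap x q p) =
      pathWeight w p * pathWeight w q := by
  rw [tailSwap_eq hq, tailSwap_eq hp]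
  conv_rhs => rw [List.eq_take_idxOf_append_cons hp, List.eq_take_idxOf_append_cons hq]
  generalize p.take (p.idxOf x) = A, p.drop (p.idxOf x + 1) = B,
    q.take (q.idxOf x) = C, q.drop (q.idxOf x + 1) = D
  rw [pathWeight_append_cons w A D, pathWeight_append_cons w C B,
    pathWeight_append_cons w A B, pathWeight_append_cons w C D]
  ring

end TailSwap

section TailSwapPoint

variable {ι : Type*} [LinearOrder ι] [DecidableEq V] {π : ι → List V} {i j : ι} {x : V}

structure IsTailSwapPoint (π : ι → List V) (i : ι) (x : V) (j : ι) : Prop where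
  ne : i ≠ j
  mem_left : x ∈ π i
  mem_right : x ∈ π j
  left_le : ∀ k l, k ≠ l → ∀ z ∈ π k, z ∈ π l → i ≤ k
  notMem_of_mem_take : ∀ z ∈ (π i).take ((π i).idxOf x), ∀ l ≠ i, z ∉ π l
  right_le : ∀ l ≠ i, x ∈ π l → j ≤ l

theorem IsTailSwapPoint.idxOf_le (h : IsTailSwapPoint π i x j) {y : V} {l : ι} (hy : y ∈ π i)
    (hli : l ≠ i) (hyl : y ∈ π l) : (π i).idxOf x ≤ (π i).idxOf y :=
  not_lt.1 fun hlt => h.notMem_of_mem_take y ((List.mem_take_iff_idxOf_lt hy).2 hlt) l hli hyl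

theorem IsTailSwapPoint.unique {i' j' : ι} {x' : V} (h : IsTailSwapPoint π i x j)
    (h' : IsTailSwapPoint π i' x' j') : i = i' ∧ x = x' ∧ j = j' := by
  obtain rfl : i = i' := le_antisymm (h.left_le i' j' h'.ne x' h'.mem_left h'.mem_right)
    (h'.left_le i j h.ne x h.mem_left h.mem_right)
  obtain rfl : x = x' := (List.idxOf_inj h.mem_left).1 <| le_antisymm
    (h.idxOf_le h'.mem_left h'.ne.symm h'.mem_right) (h'.idxOf_le h.mem_left h.ne.symm h.mem_right)
  exact ⟨rfl, rfl, le_antisymm (h.right_le j' h'.ne.symm h'.mem_right)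
    (h'.right_le j h.ne.symm h.mem_right)⟩

theorem exists_isTailSwapPoint [Finite ι] (h : ¬ Pairwise fun k l => (π k).Disjoint (π l)) :
    ∃ i x j, IsTailSwapPoint π i x j := by
  simp only [Pairwise, List.Disjoint, not_forall] at h
  obtain ⟨k₀, l₀, hkl₀, z₀, hzk₀, hzl₀, -⟩ := h
  obtain ⟨i, ⟨l₁, hil₁, z₁, hzi₁, hzl₁⟩, hi⟩ :=
    Set.exists_min_image {k | ∃ l, k ≠ l ∧ ∃ z ∈ π k, z ∈ π l} id (Set.toFinite _)
      ⟨k₀, l₀, hkl₀, z₀, hzk₀, hzl₀⟩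
  obtain ⟨x, ⟨hxi, l₂, hl₂i, hxl₂⟩, hx⟩ :=
    Set.exists_min_image {z | z ∈ π i ∧ ∃ l ≠ i, z ∈ π l} (π i).idxOf
      ((π i).finite_toSet.subset fun _ hz => hz.1) ⟨z₁, hzi₁, l₁, hil₁.symm, hzl₁⟩
  obtain ⟨j, ⟨hji, hxj⟩, hj⟩ :=
    Set.exists_min_image {l | l ≠ i ∧ x ∈ π l} id (Set.toFinite _) ⟨l₂, hl₂i, hxl₂⟩
  refine ⟨i, x, j, ⟨hji.symm, hxi, hxj, ?_, ?_, fun l hli hxl => hj l ⟨hli, hxl⟩⟩⟩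
  · exact fun k l hkl z hzk hzl => hi k ⟨l, hkl, z, hzk, hzl⟩
  · intro z hz l hli hzl
    have hzi := List.mem_of_mem_take hz
    exact (List.mem_take_iff_idxOf_lt hzi).1 hz |>.not_ge (hx z ⟨hzi, l, hli, hzl⟩)

def swapTails (π : ι → List V) (i : ι) (x : V) (j : ι) : ι → List V :=
  Function.update (Function.update π i (tailSwap x (π i) (π j))) j (tailSwap x (π j) (π i))

theorem swapTails_left (hij : i ≠ j) : swapTails π i x j i = tailSwap x (π i) (π j) := by
  simp [swapTails, hij]

theorem swapTails_right : swapTails π i x j j = tailSwap x (π j) (π i) := by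
  simp [swapTails]

theorem swapTails_of_ne {k : ι} (hki : k ≠ i) (hkj : k ≠ j) : swapTails π i x j k = π k := by
  simp [swapTails, hki, hkj]

theorem mem_swapTails {k : ι} {z : V} (hz : z ∈ swapTails π i x j k) :
    z ∈ π k ∨ z ∈ π i ∨ z ∈ π j := by
  by_cases hkj : k = j
  · subst hkj
    rw [swapTails_right] at hz
    exact Or.inr (mem_or_mem_of_mem_tailSwap hz).symm
  by_cases hki : k = i
  · subst hki
    rw [swapTails_left hkj] at hz
    exact Or.inr (mem_or_mem_of_mem_tailSwap hz)
  · rw [swapTails_of_ne hki hkj] at hz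
    exact Or.inl hz

theorem swapTails_swapTails (hij : i ≠ j) (hi : x ∈ π i) (hj : x ∈ π j) :
    swapTails (swapTails π i x j) i x j = π := by
  funext k
  by_cases hkj : k = j
  · subst hkj
    rw [swapTails_right, swapTails_right, swapTails_left hij, tailSwap_tailSwap hj hi]
  by_cases hki : k = i
  · subst hki
    rw [swapTails_left hij, swapTails_right, swapTails_left hij, tailSwap_tailSwap hi hj]
  · rw [swapTails_of_ne hki hkj, swapTails_of_ne hki hkj]

theorem IsTailSwapPoint.swapTails (h : IsTailSwapPoint π i x j) (hnd : (π i).Nodup) :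
    IsTailSwapPoint (swapTails π i x j) i x j where
  ne := h.ne
  mem_left := by rw [swapTails_left h.ne]; exact mem_tailSwap_self h.mem_right
  mem_right := by rw [swapTails_right]; exact mem_tailSwap_self h.mem_left
  left_le k l hkl z hzk hzl := by
    refine not_lt.1 fun hki => ?_
    have hkj : k ≠ j := (hki.trans_le (h.left_le j i h.ne.symm x h.mem_right h.mem_left)).ne
    rw [swapTails_of_ne hki.ne hkj] at hzk
    obtain hz | hz | hz := mem_swapTails hzl
    exacts [(h.left_le k l hkl z hzk hz).not_gt hki, (h.left_le k i hki.ne z hzk hz).not_gt hki,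
      (h.left_le k j hkj z hzk hz).not_gt hki]
  notMem_of_mem_take z hz l hli hzl := by
    rw [swapTails_left h.ne, take_idxOf_tailSwap h.mem_right] at hz
    by_cases hlj : l = j
    · subst hlj
      rw [swapTails_right] at hzl
      rcases List.mem_append.1 hzl with hzl | hzl
      · exact h.notMem_of_mem_take z hz l hli (List.mem_of_mem_take hzl)
      · exact List.disjoint_take_drop hnd le_rfl hz hzl
    · rw [swapTails_of_ne hli hlj] at hzl
      exact h.notMem_of_mem_take z hz l hli hzl
  right_le l hli hxl := by
    by_cases hlj : l = j
    · exact hlj.ge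
    · rw [swapTails_of_ne hli hlj] at hxl
      exact h.right_le l hli hxl

theorem prod_pathWeight_swapTails [Fintype ι] [CommRing R] (w : V → V → R) (hij : i ≠ j)
    (hi : x ∈ π i) (hj : x ∈ π j) :
    ∏ k, pathWeight w (swapTails π i x j k) = ∏ k, pathWeight w (π k) := by
  rw [← Finset.prod_mul_prod_compl {i, j}, ← Finset.prod_mul_prod_compl {i, j},
    Finset.prod_pair hij, Finset.prod_pair hij, swapTails_left hij, swapTails_right,
    pathWeight_tailSwap_mul w hi hj]
  congr 1
  refine Finset.prod_congr rfl fun k hk => ?_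
  simp only [Finset.mem_compl, Finset.mem_insert, Finset.mem_singleton, not_or] at hk
  rw [swapTails_of_ne hk.1 hk.2]

end TailSwapPoint

section PathSystems

variable {ι : Type*} {adj : V → V → Prop} {u v : ι → V}

def IsPathSystem (adj : V → V → Prop) (u v : ι → V) (a : Equiv.Perm ι × (ι → List V)) :
    Prop :=
  ∀ k, IsDirPath adj (u k) (v (a.1 k)) (a.2 k)

theorem finite_setOf_isPathSystem [Finite V] [Finite ι]
    (hacyc : ∀ v p, IsDirPath adj v v p → p.length ≤ 1) (u v : ι → V) :
    {a | IsPathSystem adj u v a}.Finite :=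
  (Set.finite_univ.prod (Set.Finite.pi fun _ => finite_setOf_isChain hacyc)).subset
    fun _ ha => ⟨trivial, fun k _ => (ha k).2.2.2⟩

theorem det_finsum_pathWeight [Fintype ι] [DecidableEq ι] [Finite V] [CommRing R]
    (w : V → V → R) (hacyc : ∀ v p, IsDirPath adj v v p → p.length ≤ 1)
    (s : Finset (Equiv.Perm ι × (ι → List V)))
    (hs : ∀ a, a ∈ s ↔ IsPathSystem adj u v a) :
    (Matrix.of fun i j =>
        ∑ᶠ p : {p : List V // IsDirPath adj (u i) (v j) p}, pathWeight w p.1).det =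
      ∑ a ∈ s, (Equiv.Perm.sign a.1 : R) * ∏ k, pathWeight w (a.2 k) := by
  have hpaths : ∀ a b, {p | IsDirPath adj a b p}.Finite := fun a b =>
    (finite_setOf_isChain hacyc).subset fun _ hp => hp.2.2.2
  simp only [finsum_subtype_eq_sum_toFinset (hpaths _ _), Matrix.det_of_sum]
  exact (Finset.sum_finset_product s _ _ (fun a => by simp [hs, IsPathSystem])
    (f := fun a => (Equiv.Perm.sign a.1 : R) * ∏ k, pathWeight w (a.2 k))).symm

variable [LinearOrder ι]

theorem IsPathSystem.eq_one_of_pairwise_disjoint [Finite ι]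
    (hcross : ∀ i j i' j' : ι, i < j → j' < i' →
      ∀ p q, IsDirPath adj (u i) (v j) p → IsDirPath adj (u i') (v j') q →
        ∃ z, z ∈ p ∧ z ∈ q)
    {a : Equiv.Perm ι × (ι → List V)} (ha : IsPathSystem adj u v a)
    (hdisj : Pairwise fun k l => (a.2 k).Disjoint (a.2 l)) : a.1 = 1 := by
  by_contra hσ
  obtain ⟨k, hk⟩ := a.1.exists_lt_apply_of_ne_one hσ
  obtain ⟨l, hl⟩ := a.1.exists_apply_lt_of_ne_one hσ
  obtain ⟨z, hzk, hzl⟩ := hcross k (a.1 k) l (a.1 l) hk hl _ _ (ha k) (ha l)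
  exact hdisj (fun hkl => (hkl ▸ hk).asymm hl) hzk hzl

theorem sum_sign_mul_prod_pathWeight_of_pairwise_disjoint [Fintype ι] [Finite V] [CommRing R]
    (w : V → V → R) (hacyc : ∀ v p, IsDirPath adj v v p → p.length ≤ 1)
    (hcross : ∀ i j i' j' : ι, i < j → j' < i' →
      ∀ p q, IsDirPath adj (u i) (v j) p → IsDirPath adj (u i') (v j') q →
        ∃ z, z ∈ p ∧ z ∈ q)
    (s : Finset (Equiv.Perm ι × (ι → List V)))
    (hs : ∀ a, a ∈ s ↔
      IsPathSystem adj u v a ∧ Pairwise fun k l => (a.2 k).Disjoint (a.2 l)) :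
    ∑ a ∈ s, (Equiv.Perm.sign a.1 : R) * ∏ k, pathWeight w (a.2 k) =
      ∑ᶠ π : {π : ι → List V // (∀ k, IsDirPath adj (u k) (v k) (π k)) ∧
        Pairwise fun k l => (π k).Disjoint (π l)}, ∏ k, pathWeight w (π.1 k) := by
  have hfin : {π : ι → List V | (∀ k, IsDirPath adj (u k) (v k) (π k)) ∧
      Pairwise fun k l => (π k).Disjoint (π l)}.Finite :=
    (Set.Finite.pi fun _ => finite_setOf_isChain hacyc).subset fun _ hπ k _ => (hπ.1 k).2.2.2
  have hmem : ∀ a, a ∈ s ↔ a.1 = 1 ∧ a.2 ∈ hfin.toFinset := by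
    rintro ⟨σ, π⟩
    rw [hs, Set.Finite.mem_toFinset]
    constructor
    · rintro ⟨hsys, hdisj⟩
      obtain rfl : σ = 1 := hsys.eq_one_of_pairwise_disjoint hcross hdisj
      exact ⟨rfl, hsys, hdisj⟩
    · rintro ⟨rfl, hpaths, hdisj⟩
      exact ⟨hpaths, hdisj⟩
  rw [finsum_subtype_eq_sum_toFinset hfin fun π => ∏ k, pathWeight w (π k)]
  refine Finset.sum_nbij' Prod.snd (fun π => (1, π)) (fun a ha => ((hmem a).1 ha).2)
    (fun π hπ => (hmem _).2 ⟨rfl, hπ⟩) (fun a ha => Prod.ext ((hmem a).1 ha).1.symm rfl)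
    (fun _ _ => rfl) fun a ha => ?_
  simp [((hmem a).1 ha).1]

variable [DecidableEq V]

theorem IsPathSystem.swapTails {σ : Equiv.Perm ι} {π : ι → List V} {i j : ι} {x : V}
    (ha : IsPathSystem adj u v (σ, π)) (h : IsTailSwapPoint π i x j) :
    IsPathSystem adj u v (σ * Equiv.swap i j, swapTails π i x j) := by
  intro k
  simp only [Equiv.Perm.mul_apply]
  by_cases hkj : k = j
  · subst hkj
    rw [swapTails_right, Equiv.swap_apply_right]
    exact (ha k).tailSwap (ha i) h.mem_right h.mem_left
  by_cases hki : k = i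
  · subst hki
    rw [swapTails_left h.ne, Equiv.swap_apply_left]
    exact (ha k).tailSwap (ha j) h.mem_left h.mem_right
  · rw [swapTails_of_ne hki hkj, Equiv.swap_apply_of_ne_of_ne hki hkj]
    exact ha k

open scoped Classical in
noncomputable def lgvInvolution (a : Equiv.Perm ι × (ι → List V)) :
    Equiv.Perm ι × (ι → List V) :=
  if h : ∃ t : ι × V × ι, IsTailSwapPoint a.2 t.1 t.2.1 t.2.2 then
    (a.1 * Equiv.swap h.choose.1 h.choose.2.2,
      swapTails a.2 h.choose.1 h.choose.2.1 h.choose.2.2)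
  else a

theorem lgvInvolution_eq {σ : Equiv.Perm ι} {π : ι → List V} {i j : ι} {x : V}
    (h : IsTailSwapPoint π i x j) :
    lgvInvolution (σ, π) = (σ * Equiv.swap i j, swapTails π i x j) := by
  have hex : ∃ t : ι × V × ι, IsTailSwapPoint π t.1 t.2.1 t.2.2 := ⟨(i, x, j), h⟩
  obtain ⟨hi, hx, hj⟩ := hex.choose_spec.unique h
  simp only [lgvInvolution, dif_pos hex, hi, hx, hj]

theorem sum_sign_mul_prod_pathWeight_eq_zero [Fintype ι] [CommRing R] (w : V → V → R)
    (hacyc : ∀ v p, IsDirPath adj v v p → p.length ≤ 1)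
    (s : Finset (Equiv.Perm ι × (ι → List V)))
    (hs : ∀ a, a ∈ s ↔
      IsPathSystem adj u v a ∧ ¬ Pairwise fun k l => (a.2 k).Disjoint (a.2 l)) :
    ∑ a ∈ s, (Equiv.Perm.sign a.1 : R) * ∏ k, pathWeight w (a.2 k) = 0 := by
  have hpoint : ∀ a ∈ s, ∃ i x j, IsTailSwapPoint a.2 i x j ∧ (a.2 i).Nodup := by
    intro a ha
    obtain ⟨hsys, hmeet⟩ := (hs a).1 ha
    obtain ⟨i, x, j, h⟩ := exists_isTailSwapPoint hmeet
    exact ⟨i, x, j, h, List.IsChain.nodup_of_acyclic hacyc (hsys i).2.2.2⟩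
  refine Finset.sum_involution (fun a _ => lgvInvolution a) ?_ ?_ ?_ ?_
  · rintro ⟨σ, π⟩ ha
    obtain ⟨i, x, j, h, -⟩ := hpoint _ ha
    rw [lgvInvolution_eq h, Equiv.Perm.sign_mul, Equiv.Perm.sign_swap h.ne,
      prod_pathWeight_swapTails w h.ne h.mem_left h.mem_right]
    push_cast
    ring
  · rintro ⟨σ, π⟩ ha - heq
    obtain ⟨i, x, j, h, -⟩ := hpoint _ ha
    rw [lgvInvolution_eq h, Prod.mk.injEq, mul_eq_left, Equiv.swap_eq_one_iff] at heq
    exact h.ne heq.1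
  · rintro ⟨σ, π⟩ ha
    obtain ⟨i, x, j, h, hnd⟩ := hpoint _ ha
    rw [lgvInvolution_eq h]
    have h' := h.swapTails hnd
    refine (hs _).2 ⟨((hs _).1 ha).1.swapTails h, fun hdisj => ?_⟩
    exact hdisj h.ne h'.mem_left h'.mem_right
  · rintro ⟨σ, π⟩ ha
    obtain ⟨i, x, j, h, hnd⟩ := hpoint _ ha
    simp only [lgvInvolution_eq h, lgvInvolution_eq (h.swapTails hnd), Equiv.mul_swap_mul_self,
      swapTails_swapTails h.ne h.mem_left h.mem_right]

end PathSystems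

/-- The Lindström–Gessel–Viennot lemma: for a finite directed acyclic graph and
source/sink families such that any "crossing" pair of paths must intersect, the
determinant of the path-weight matrix equals the weighted sum over families of
pairwise vertex-disjoint path systems. -/
theorem lindstrom_gessel_viennot [Fintype V] [CommRing R]
    (adj : V → V → Prop) (w : V → V → R)
    -- acyclicity: every directed path from a vertex back to itself is trivial
    (hacyc : ∀ v p, IsDirPath adj v v p → p.length ≤ 1)
    (r : ℕ) (u v : Fin r → V)
    -- crossing paths intersect
    (hcross : ∀ i j i' j' : Fin r, i < j → j' < i' →
      ∀ p q, IsDirPath adj (u i) (v j) p → IsDirPath adj (u i') (v j') q →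
        ∃ z, z ∈ p ∧ z ∈ q) :
    Matrix.det (Matrix.of fun i j : Fin r =>
        finsum fun p : {p : List V // IsDirPath adj (u i) (v j) p} =>
          pathWeight w p.1) =
      finsum fun π : {π : Fin r → List V //
          (∀ k, IsDirPath adj (u k) (v k) (π k)) ∧
          (∀ k l, k ≠ l → ∀ z, z ∈ π k → z ∉ π l)} =>
        ∏ k : Fin r, pathWeight w (π.1 k) := by
  classical
  have hsystems := finite_setOf_isPathSystem hacyc u v
  rw [det_finsum_pathWeight w hacyc hsystems.toFinset fun a => hsystems.mem_toFinset,
    ← Finset.sum_filter_not_add_sum_filter _ fun a =>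
      Pairwise fun k l => (a.2 k).Disjoint (a.2 l),
    sum_sign_mul_prod_pathWeight_eq_zero w hacyc (u := u) (v := v) _ fun a => by simp, zero_add]
  exact sum_sign_mul_prod_pathWeight_of_pairwise_disjoint w hacyc hcross _ fun a => by simp
end

section
/- Consider the $2\times 2$ geometric local move $\ell : (a,b,c,d) \mapsto \big(\tfrac{bc}{a(b+c)},\, b,\, c,\, d(b+c)\big)$ defined for positive reals $a,b,c,d$. Then $\ell$ is a bijection from $(\mathbb{R}_{>0})^4$ to itself, and in logarithmic coordinates $(\log a,\log b,\log c,\log d)\mapsto(\log a',\log b',\log c',\log d')$ it has Jacobian determinant of absolute value $1$. -/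
open Real

/-- The 2×2 geometric local move
`(a,b,c,d) ↦ (bc/(a(b+c)), b, c, d(b+c))`. -/
noncomputable def localMove (p : ℝ × ℝ × ℝ × ℝ) : ℝ × ℝ × ℝ × ℝ :=
  (p.2.1 * p.2.2.1 / (p.1 * (p.2.1 + p.2.2.1)), p.2.1, p.2.2.1,
    p.2.2.2 * (p.2.1 + p.2.2.1))

/-- The local move in logarithmic coordinates `u ↦ log (localMove (exp u))`. -/
noncomputable def localMoveLog (u : Fin 4 → ℝ) : Fin 4 → ℝ :=
  ![Real.log (exp (u 1) * exp (u 2) / (exp (u 0) * (exp (u 1) + exp (u 2)))),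
    u 1, u 2,
    Real.log (exp (u 3) * (exp (u 1) + exp (u 2)))]

/-!
For fixed `b, c` the move acts on `a` by the involution `a ↦ bc/(a(b+c))` and on `d` by
multiplication by `b + c`, so it is inverted by the same formula with `d ↦ d/(b+c)`.
In logarithmic coordinates it reads `v ↦ (v₁ + v₂ - v₀ - s, v₁, v₂, v₃ + s)` with
`s = log (e^{v₁} + e^{v₂})` depending on `v₁, v₂` only; expanding the Jacobian determinant along
the first column leaves a unitriangular block, so the determinant is `-1`.
-/

def posQuadruples : Set (ℝ × ℝ × ℝ × ℝ) :=
  {p | 0 < p.1 ∧ 0 < p.2.1 ∧ 0 < p.2.2.1 ∧ 0 < p.2.2.2}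

noncomputable def localMoveInv (p : ℝ × ℝ × ℝ × ℝ) : ℝ × ℝ × ℝ × ℝ :=
  (p.2.1 * p.2.2.1 / (p.1 * (p.2.1 + p.2.2.1)), p.2.1, p.2.2.1, p.2.2.2 / (p.2.1 + p.2.2.1))

theorem mapsTo_localMove : Set.MapsTo localMove posQuadruples posQuadruples := by
  rintro ⟨a, b, c, d⟩ ⟨ha, hb, hc, hd⟩
  exact ⟨by simp only [localMove]; positivity, hb, hc, by simp only [localMove]; positivity⟩

theorem mapsTo_localMoveInv : Set.MapsTo localMoveInv posQuadruples posQuadruples := by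
  rintro ⟨a, b, c, d⟩ ⟨ha, hb, hc, hd⟩
  exact ⟨by simp only [localMoveInv]; positivity, hb, hc,
    by simp only [localMoveInv]; positivity⟩

theorem leftInvOn_localMoveInv_localMove :
    Set.LeftInvOn localMoveInv localMove posQuadruples := by
  rintro ⟨a, b, c, d⟩ ⟨ha, hb, hc, hd⟩
  simp only [localMove, localMoveInv, Prod.mk.injEq, true_and]
  constructor <;> field_simp

theorem rightInvOn_localMoveInv_localMove :
    Set.RightInvOn localMoveInv localMove posQuadruples := by
  rintro ⟨a, b, c, d⟩ ⟨ha, hb, hc, hd⟩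
  simp only [localMove, localMoveInv, Prod.mk.injEq, true_and]
  constructor <;> field_simp

theorem bijOn_localMove : Set.BijOn localMove posQuadruples posQuadruples :=
  Set.InvOn.bijOn ⟨leftInvOn_localMoveInv_localMove, rightInvOn_localMoveInv_localMove⟩
    mapsTo_localMove mapsTo_localMoveInv

theorem localMoveLog_eq (v : Fin 4 → ℝ) :
    localMoveLog v = ![v 1 + v 2 - v 0 - log (exp (v 1) + exp (v 2)), v 1, v 2,
      v 3 + log (exp (v 1) + exp (v 2))] := by
  have hS : exp (v 1) + exp (v 2) ≠ 0 := by positivity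
  rw [localMoveLog, log_div (by positivity) (by positivity), log_mul (exp_ne_zero _) hS,
    log_mul (exp_ne_zero _) (exp_ne_zero _), log_mul (exp_ne_zero _) hS, log_exp, log_exp,
    log_exp, log_exp]
  congr 1
  ring

theorem hasFDerivAt_log_exp_add_exp {ι : Type*} [Fintype ι] (i j : ι) (v : ι → ℝ) :
    HasFDerivAt (fun w : ι → ℝ => log (exp (w i) + exp (w j)))
      ((exp (v i) / (exp (v i) + exp (v j))) • ContinuousLinearMap.proj (R := ℝ) i +
        (exp (v j) / (exp (v i) + exp (v j))) • ContinuousLinearMap.proj (R := ℝ) j) v := by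
  have hS : exp (v i) + exp (v j) ≠ 0 := by positivity
  refine (((hasFDerivAt_apply i v).exp).add ((hasFDerivAt_apply j v).exp)).log hS
    |>.congr_fderiv ?_
  ext w
  simp only [Pi.add_apply, add_apply, smul_apply, ContinuousLinearMap.proj_apply, smul_eq_mul]
  field_simp

def localMoveLogJacobian (x y : ℝ) : Matrix (Fin 4) (Fin 4) ℝ :=
  !![-1, 1 - x, 1 - y, 0;
     0, 1, 0, 0;
     0, 0, 1, 0;
     0, x, y, 1]

theorem det_localMoveLogJacobian (x y : ℝ) : (localMoveLogJacobian x y).det = -1 := by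
  simp [localMoveLogJacobian, Matrix.det_succ_row_zero, Fin.sum_univ_succ]

theorem localMoveLogJacobian_mulVec (x y : ℝ) (w : Fin 4 → ℝ) :
    (localMoveLogJacobian x y).mulVec w =
      ![-w 0 + (1 - x) * w 1 + (1 - y) * w 2, w 1, w 2, x * w 1 + y * w 2 + w 3] := by
  ext i
  fin_cases i <;> simp [localMoveLogJacobian, dotProduct, Fin.sum_univ_four]

theorem hasFDerivAt_localMoveLog (u : Fin 4 → ℝ) :
    HasFDerivAt localMoveLog
      (Matrix.toLin' (localMoveLogJacobian (exp (u 1) / (exp (u 1) + exp (u 2)))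
        (exp (u 2) / (exp (u 1) + exp (u 2))))).toContinuousLinearMap u := by
  rw [funext localMoveLog_eq]
  have hs := hasFDerivAt_log_exp_add_exp 1 2 u
  refine hasFDerivAt_pi'' fun i => ?_
  fin_cases i <;>
    [refine ((((hasFDerivAt_apply 1 u).add (hasFDerivAt_apply 2 u)).sub
      (hasFDerivAt_apply 0 u)).sub hs).congr_fderiv ?_;
    refine (hasFDerivAt_apply 1 u).congr_fderiv ?_;
    refine (hasFDerivAt_apply 2 u).congr_fderiv ?_;
    refine ((hasFDerivAt_apply 3 u).add hs).congr_fderiv ?_] <;>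
  ext w <;>
  simp only [ContinuousLinearMap.comp_apply, LinearMap.coe_toContinuousLinearMap',
    Matrix.toLin'_apply, localMoveLogJacobian_mulVec, ContinuousLinearMap.proj_apply, add_apply,
    sub_apply, smul_apply, smul_eq_mul, Fin.zero_eta, Fin.mk_one, Fin.reduceFinMk,
    Matrix.cons_val] <;>
  ring

/-- The geometric local move is a bijection of `(ℝ_{>0})⁴` onto itself, and in
logarithmic coordinates it is everywhere differentiable with Jacobian
determinant of absolute value `1`. -/
theorem localMove_bijective_and_log_jacobian :
    Set.BijOn localMove
      {p : ℝ × ℝ × ℝ × ℝ | 0 < p.1 ∧ 0 < p.2.1 ∧ 0 < p.2.2.1 ∧ 0 < p.2.2.2}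
      {p : ℝ × ℝ × ℝ × ℝ | 0 < p.1 ∧ 0 < p.2.1 ∧ 0 < p.2.2.1 ∧ 0 < p.2.2.2} ∧
    ∀ u : Fin 4 → ℝ, ∃ J : (Fin 4 → ℝ) →L[ℝ] (Fin 4 → ℝ),
      HasFDerivAt localMoveLog J u ∧
        |LinearMap.det (J : (Fin 4 → ℝ) →ₗ[ℝ] (Fin 4 → ℝ))| = 1 := by
  refine ⟨bijOn_localMove, fun u => ⟨_, hasFDerivAt_localMoveLog u, ?_⟩⟩
  rw [LinearMap.coe_toContinuousLinearMap, LinearMap.det_toLin', det_localMoveLogJacobian]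
  norm_num
end
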